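/- arXiv:1703.07336 — 4 statements merged into one kernel-verified Lean document; each statement's English description precedes it below -/
import Mathlib

section
/- Let A = (a_{ij}) be a d×d real matrix that is upper triangular and unipotent (a_{ii} = 1 for all i and a_{ij} = 0 for i > j). If every minor (determinant of a square submatrix) of A is nonnegative, and every minor of the matrix with entries (−1)^{i+j} a_{ij} is also nonnegative, then A is the identity matrix. -/
/-- All minors (determinants of square submatrices) of `M` are nonnegative. -/
def MinorsNonneg {d : ℕ} (M : Matrix (Fin d) (Fin d) ℝ) : Prop :=
  ∀ (k : ℕ) (r c : Fin k → Fin d), StrictMono r → StrictMono c →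
    0 ≤ (M.submatrix r c).det

/-- Let `A` be a `d × d` real matrix which is upper triangular and
unipotent. If every minor of `A` is nonnegative, and every minor of the matrix with
entries `(-1)^{i+j} a_{ij}` is also nonnegative, then `A` is the identity. -/
theorem statement_7 {d : ℕ} (A : Matrix (Fin d) (Fin d) ℝ)
    (hdiag : ∀ i, A i i = 1) (hlow : ∀ i j : Fin d, j < i → A i j = 0)
    (h1 : MinorsNonneg A)
    (h2 : MinorsNonneg (Matrix.of fun i j : Fin d =>
      (-1 : ℝ) ^ ((i : ℕ) + (j : ℕ)) * A i j)) :
    A = 1 := by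
  have sm1 : ∀ (x : Fin d), StrictMono (fun _ : Fin 1 => x) := by
    intro x a b h
    exact absurd (Subsingleton.elim a b) h.ne
  -- 1×1 minors of A: entries nonneg
  have hpos : ∀ i j : Fin d, 0 ≤ A i j := by
    intro i j
    have := h1 1 (fun _ => i) (fun _ => j) (sm1 i) (sm1 j)
    simpa [Matrix.det_fin_one] using this
  -- superdiagonal is zero
  have hsucc : ∀ (i j : Fin d), (i : ℕ) + 1 = (j : ℕ) → A i j = 0 := by
    intro i j hij
    have := h2 1 (fun _ => i) (fun _ => j) (sm1 i) (sm1 j)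
    rw [Matrix.det_fin_one] at this
    simp only [Matrix.submatrix_apply, Matrix.of_apply] at this
    have hodd : Odd ((i : ℕ) + (j : ℕ)) := ⟨i, by omega⟩
    rw [hodd.neg_one_pow] at this
    have : A i j ≤ 0 := by linarith
    exact le_antisymm this (hpos i j)
  ext i j
  rcases lt_trichotomy i j with hlt | heq | hgt
  · -- upper part is zero
    rw [Matrix.one_apply_ne (ne_of_lt hlt)]
    rcases Nat.lt_or_ge ((i : ℕ) + 1) (j : ℕ) with hj | hj
    · -- use 2×2 minor
      have hi1 : (i : ℕ) + 1 < d := lt_trans hj j.2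
      let i1 : Fin d := ⟨(i : ℕ) + 1, hi1⟩
      have hii1 : i < i1 := by rw [Fin.lt_def]; exact Nat.lt_succ_self _
      have hi1j : i1 < j := by rw [Fin.lt_def]; exact hj
      have smr : StrictMono ![i, i1] := by
        intro a b h
        fin_cases a <;> fin_cases b <;>
          first
          | exact absurd h (by decide)
          | simpa using hii1
      have smc : StrictMono ![i1, j] := by
        intro a b h
        fin_cases a <;> fin_cases b <;>
          first
          | exact absurd h (by decide)
          | simpa using hi1j
      have hdet := h1 2 ![i, i1] ![i1, j] smr smc
      rw [Matrix.det_fin_two] at hdet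
      simp only [Matrix.submatrix_apply, Matrix.cons_val_zero, Matrix.cons_val_one,
        Matrix.head_cons] at hdet
      have e1 : A i i1 = 0 := hsucc i i1 rfl
      have e2 : A i1 i1 = 1 := hdiag i1
      rw [e1, e2] at hdet
      have : A i j ≤ 0 := by linarith
      exact le_antisymm this (hpos i j)
    · have : (i : ℕ) + 1 = (j : ℕ) := by
        have := hlt
        rw [Fin.lt_def] at this
        omega
      exact hsucc i j this
  · rw [heq, hdiag, Matrix.one_apply_eq]
  · rw [Matrix.one_apply_ne (ne_of_gt hgt)]
    exact hlow i j hgt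
end

section
/- Let U be an open neighborhood of 0 in ℝ^n and let M : U → M_d(ℝ) be a real-analytic family of d×d matrices. Suppose M(0) has a simple real eigenvalue λ_0 ≠ 0 (i.e. λ_0 is a root of multiplicity one of the characteristic polynomial of M(0)) with associated unit eigenvector X_0. Then there exist an open neighborhood V ⊆ U of 0 and real-analytic maps f : V → ℝ and X : V → ℝ^d such that f(0) = λ_0, X(0) = X_0, and for every v ∈ V, f(v) is a simple eigenvalue of M(v) with eigenvector X(v) ≠ 0. -/
/-!
The eigenvalue comes from the analytic implicit function theorem applied to
`(v, t) ↦ χ_{M v}(t)`: a simple root `λ₀` of `χ_{M 0}` has `χ'_{M 0}(λ₀) ≠ 0`, and this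
nondegeneracy persists along the implicit function, so its values stay simple roots.
For the eigenvector, `(t - A) adj(t - A) = χ_A(t)` shows that `adj(f v - M v)` maps every vector
to an eigenvector for `f v`, while `adj(λ - A) x = χ_A'(λ) x` for an eigenvector `x` of `A`
for `λ`; so `adj(f v - M v)` applied to a fixed multiple of `X₀` is an analytic eigenvector
equal to `X₀` at `v = 0`.
-/

open Matrix Polynomial Filter Topology
open scoped ContDiff

section AnalyticMatrix

variable {𝕜 E ι : Type*} [NontriviallyNormedField 𝕜] [NormedAddCommGroup E] [NormedSpace 𝕜 E]
  [Fintype ι] [DecidableEq ι] {A : E → Matrix ι ι 𝕜} {x : E}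

theorem analyticAt_det (hA : ∀ i j, AnalyticAt 𝕜 (fun y => A y i j) x) :
    AnalyticAt 𝕜 (fun y => (A y).det) x := by
  simp only [det_apply, Units.smul_def, zsmul_eq_mul]
  exact Finset.analyticAt_fun_sum _ fun σ _ =>
    analyticAt_const.mul (Finset.analyticAt_fun_prod _ fun i _ => hA (σ i) i)

theorem analyticAt_adjugate_mulVec (hA : ∀ i j, AnalyticAt 𝕜 (fun y => A y i j) x) (w : ι → 𝕜) :
    AnalyticAt 𝕜 (fun y => (A y).adjugate *ᵥ w) x := by
  have hadj : ∀ i j, AnalyticAt 𝕜 (fun y => (A y).adjugate i j) x := fun i j => by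
    simp only [adjugate_apply]
    refine analyticAt_det fun k l => ?_
    by_cases hk : k = j
    · simpa only [updateRow_apply, hk, if_true] using analyticAt_const
    · simpa only [updateRow_apply, hk, if_false] using hA k l
  exact AnalyticAt.pi fun i =>
    Finset.analyticAt_fun_sum _ fun j _ => (hadj i j).mul analyticAt_const

theorem analyticAt_scalar_sub_apply (hA : ∀ i j, AnalyticAt 𝕜 (fun y => A y i j) x) {f : E → 𝕜}
    (hf : AnalyticAt 𝕜 f x) (i j : ι) :
    AnalyticAt 𝕜 (fun y => (scalar ι (f y) - A y) i j) x := by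
  by_cases hij : i = j
  · simpa [hij] using hf.fun_sub (hA j j)
  · simpa [hij] using (hA i j).fun_neg

theorem analyticAt_eval_charpoly (hA : ∀ i j, AnalyticAt 𝕜 (fun y => A y i j) x) {f : E → 𝕜}
    (hf : AnalyticAt 𝕜 f x) :
    AnalyticAt 𝕜 (fun y => (A y).charpoly.eval (f y)) x := by
  simpa only [eval_charpoly] using analyticAt_det (analyticAt_scalar_sub_apply hA hf)

end AnalyticMatrix

section Adjugate

variable {𝕜 ι : Type*} [Field 𝕜] [Fintype ι] [DecidableEq ι]

theorem scalar_mulVec (s : 𝕜) (v : ι → 𝕜) : scalar ι s *ᵥ v = s • v := by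
  rw [scalar_apply, ← smul_one_eq_diagonal, smul_mulVec, one_mulVec]

theorem scalar_sub_mulVec_of_mulVec_eq_smul {A : Matrix ι ι 𝕜} {t : 𝕜} {v : ι → 𝕜}
    (hv : A *ᵥ v = t • v) (s : 𝕜) : (scalar ι s - A) *ᵥ v = (s - t) • v := by
  rw [sub_mulVec, hv, sub_smul, scalar_mulVec]

theorem mulVec_adjugate_mulVec_of_isRoot {A : Matrix ι ι 𝕜} {t : 𝕜} (ht : A.charpoly.IsRoot t)
    (w : ι → 𝕜) :
    A *ᵥ ((scalar ι t - A).adjugate *ᵥ w) = t • ((scalar ι t - A).adjugate *ᵥ w) := by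
  have hdet : (scalar ι t - A).det = 0 := by rw [← eval_charpoly]; exact ht
  have hker : (scalar ι t - A) *ᵥ ((scalar ι t - A).adjugate *ᵥ w) = 0 := by
    rw [mulVec_mulVec, mul_adjugate, hdet, zero_smul, zero_mulVec]
  rw [sub_mulVec, scalar_mulVec, sub_eq_zero] at hker
  exact hker.symm

end Adjugate

theorem adjugate_scalar_sub_mulVec_of_mulVec_eq_smul {𝕜 ι : Type*} [NontriviallyNormedField 𝕜]
    [Fintype ι] [DecidableEq ι] {A : Matrix ι ι 𝕜} {t : 𝕜} {v : ι → 𝕜}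
    (hv : A *ᵥ v = t • v) (ht : A.charpoly.IsRoot t) :
    (scalar ι t - A).adjugate *ᵥ v = A.charpoly.derivative.eval t • v := by
  set q := A.charpoly /ₘ (X - C t)
  have hfactor : (X - C t) * q = A.charpoly := mul_divByMonic_eq_iff_isRoot.2 ht
  have hq : q.eval t = A.charpoly.derivative.eval t := by
    rw [← hfactor, derivative_mul]; simp
  -- off `t`, cancel `s - t` in `adj (s - A) (s - A) v = χ_A(s) v = (s - t) q(s) v`
  have hoff : Set.EqOn (fun s => (scalar ι s - A).adjugate *ᵥ v) (fun s => q.eval s • v) {t}ᶜ := by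
    intro s hs
    refine smul_right_injective _ (sub_ne_zero.2 hs) ?_
    calc (s - t) • (scalar ι s - A).adjugate *ᵥ v
        = (scalar ι s - A).adjugate *ᵥ ((scalar ι s - A) *ᵥ v) := by
          rw [scalar_sub_mulVec_of_mulVec_eq_smul hv, mulVec_smul]
      _ = A.charpoly.eval s • v := by
          rw [mulVec_mulVec, adjugate_mul, eval_charpoly, smul_mulVec, one_mulVec]
      _ = (s - t) • q.eval s • v := by
          rw [← hfactor, eval_mul, smul_smul]; simp
  have hcont : Continuous fun s => (scalar ι s - A).adjugate *ᵥ v := by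
    simp only [scalar_apply]
    exact ((continuous_pi fun _ => continuous_id).matrix_diagonal.sub continuous_const
      ).matrix_adjugate.matrix_mulVec continuous_const
  have hon := hcont.ext_on (dense_compl_singleton t) (q.continuous.smul continuous_const) hoff
  simpa [hq] using congrFun hon t

theorem Polynomial.rootMultiplicity_eq_one_iff {R : Type*} [CommRing R] [IsDomain R] [CharZero R]
    {p : R[X]} (hp : p ≠ 0) {t : R} :
    p.rootMultiplicity t = 1 ↔ p.IsRoot t ∧ ¬ p.derivative.IsRoot t := by
  have h := one_lt_rootMultiplicity_iff_isRoot hp (t := t)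
  rw [← rootMultiplicity_pos hp] at h ⊢
  constructor
  · intro h1
    exact ⟨by omega, fun hd => by have := h.2 ⟨by omega, hd⟩; omega⟩
  · rintro ⟨h0, hd⟩
    by_contra hne
    exact hd (h.1 (by omega)).2

section ImplicitFunction

variable {𝕜 E : Type*} [RCLike 𝕜] [NormedAddCommGroup E] [NormedSpace 𝕜 E]

theorem deriv_comp_prodMk_left_eq_fderiv {F : E × 𝕜 → 𝕜} {p : E × 𝕜}
    (hF : DifferentiableAt 𝕜 F p) :
    deriv (fun s => F (p.1, s)) p.2 = fderiv 𝕜 F p (0, 1) := by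
  have h : HasFDerivAt (fun s => F (p.1, s)) (fderiv 𝕜 F p ∘L .inr 𝕜 E 𝕜) p.2 :=
    hF.hasFDerivAt.comp p.2 (hasFDerivAt_prodMk_right p.1 p.2)
  exact h.hasDerivAt.deriv

theorem AnalyticAt.continuousAt_deriv_snd {F : E × 𝕜 → 𝕜} {u : E × 𝕜} (hF : AnalyticAt 𝕜 F u) :
    ContinuousAt (fun p : E × 𝕜 => deriv (fun s => F (p.1, s)) p.2) u := by
  refine (hF.fderiv.continuousAt.clm_apply (continuousAt_const (y := ((0 : E), (1 : 𝕜))))).congr ?_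
  filter_upwards [hF.eventually_analyticAt] with p hp
  exact (deriv_comp_prodMk_left_eq_fderiv hp.differentiableAt).symm

theorem AnalyticAt.exists_analyticAt_implicitFunction [CompleteSpace E] {F : E × 𝕜 → 𝕜}
    {u : E × 𝕜} (hF : AnalyticAt 𝕜 F u) (hF' : deriv (fun s => F (u.1, s)) u.2 ≠ 0) :
    ∃ f : E → 𝕜, AnalyticAt 𝕜 f u.1 ∧ f u.1 = u.2 ∧
      ∀ᶠ x in 𝓝 u.1, F (x, f x) = F u ∧ deriv (fun s => F (x, s)) (f x) ≠ 0 := by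
  -- `C^ω` means analytic, so the smooth implicit function theorem yields an analytic `f`
  have hcd : ContDiffAt 𝕜 ω F u := hF.contDiffAt
  have hinv : (fderiv 𝕜 F u ∘L .inr 𝕜 E 𝕜).IsInvertible := by
    refine ⟨ContinuousLinearEquiv.unitsEquivAut 𝕜 (Units.mk0 _ hF'),
      ContinuousLinearMap.ext_ring ?_⟩
    simp [deriv_comp_prodMk_left_eq_fderiv hF.differentiableAt]
  set f := hcd.implicitFunction (by simp) hinv
  have hf : AnalyticAt 𝕜 f u.1 := (hcd.contDiffAt_implicitFunction _ hinv).analyticAt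
  have hf₀ : f u.1 = u.2 := hcd.implicitFunction_apply_self _ hinv
  have hderiv_cont : ContinuousAt (fun x => deriv (fun s => F (x, s)) (f x)) u.1 :=
    hF.continuousAt_deriv_snd.comp_of_eq (continuousAt_id.prodMk hf.continuousAt) (by simp [hf₀])
  refine ⟨f, hf, hf₀, ?_⟩
  filter_upwards [hcd.eventually_apply_implicitFunction _ hinv,
    hderiv_cont.eventually_ne (by rwa [hf₀])] with x hx hx'
  exact ⟨hx, hx'⟩

end ImplicitFunction

theorem exists_analyticAt_simple_root_charpoly {𝕜 E ι : Type*} [RCLike 𝕜] [NormedAddCommGroup E]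
    [NormedSpace 𝕜 E] [CompleteSpace E] [Fintype ι] [DecidableEq ι] {M : E → Matrix ι ι 𝕜}
    {x₀ : E} (hM : ∀ i j, AnalyticAt 𝕜 (fun x => M x i j) x₀) {t₀ : 𝕜}
    (ht₀ : (M x₀).charpoly.rootMultiplicity t₀ = 1) :
    ∃ f : E → 𝕜, AnalyticAt 𝕜 f x₀ ∧ f x₀ = t₀ ∧
      ∀ᶠ x in 𝓝 x₀, (M x).charpoly.rootMultiplicity (f x) = 1 := by
  set F : E × 𝕜 → 𝕜 := fun p => (M p.1).charpoly.eval p.2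
  have hF : AnalyticAt 𝕜 F (x₀, t₀) :=
    analyticAt_eval_charpoly (A := fun p : E × 𝕜 => M p.1)
      (fun i j => (hM i j).comp (g := fun x => M x i j) analyticAt_fst) analyticAt_snd
  have hderiv (p : E × 𝕜) :
      deriv (fun s => F (p.1, s)) p.2 = (M p.1).charpoly.derivative.eval p.2 :=
    (M p.1).charpoly.deriv
  obtain ⟨hroot, hsimple⟩ := (rootMultiplicity_eq_one_iff (charpoly_monic _).ne_zero).1 ht₀
  obtain ⟨f, hf, hf₀, hFf⟩ := hF.exists_analyticAt_implicitFunction (by rwa [hderiv])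
  refine ⟨f, hf, hf₀, ?_⟩
  filter_upwards [hFf] with x ⟨hx, hx'⟩
  rw [hderiv (x, f x)] at hx'
  exact (rootMultiplicity_eq_one_iff (charpoly_monic _).ne_zero).2 ⟨hx.trans hroot, hx'⟩

theorem statement_9_general {n d : ℕ} (U : Set (Fin n → ℝ)) (hU : IsOpen U)
    (h0U : (0 : Fin n → ℝ) ∈ U)
    (M : (Fin n → ℝ) → Matrix (Fin d) (Fin d) ℝ)
    (hM : ∀ v ∈ U, ∀ i j : Fin d, AnalyticAt ℝ (fun w => M w i j) v)
    (lam0 : ℝ)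
    (hsimple : (M 0).charpoly.rootMultiplicity lam0 = 1)
    (X0 : Fin d → ℝ) (hX0 : ‖X0‖ = 1) (heig : M 0 *ᵥ X0 = lam0 • X0) :
    ∃ (V : Set (Fin n → ℝ)) (f : (Fin n → ℝ) → ℝ) (X : (Fin n → ℝ) → Fin d → ℝ),
      V ⊆ U ∧ IsOpen V ∧ (0 : Fin n → ℝ) ∈ V ∧
      (∀ v ∈ V, AnalyticAt ℝ f v) ∧ (∀ v ∈ V, AnalyticAt ℝ X v) ∧
      f 0 = lam0 ∧ X 0 = X0 ∧
      ∀ v ∈ V, (M v).charpoly.rootMultiplicity (f v) = 1 ∧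
        X v ≠ 0 ∧ M v *ᵥ X v = f v • X v := by
  obtain ⟨f, hf, hf₀, hf_simple⟩ := exists_analyticAt_simple_root_charpoly (hM 0 h0U) hsimple
  have hsimple_root {A : Matrix (Fin d) (Fin d) ℝ} {t : ℝ}
      (h : A.charpoly.rootMultiplicity t = 1) :=
    (rootMultiplicity_eq_one_iff (charpoly_monic A).ne_zero).1 h
  set c := (M 0).charpoly.derivative.eval lam0
  set X : (Fin n → ℝ) → Fin d → ℝ := fun v => (scalar (Fin d) (f v) - M v).adjugate *ᵥ (c⁻¹ • X0)
  have hX : ∀ v ∈ U, AnalyticAt ℝ f v → AnalyticAt ℝ X v := fun v hv hfv =>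
    analyticAt_adjugate_mulVec (analyticAt_scalar_sub_apply (hM v hv) hfv) _
  have hX₀ : X 0 = X0 := by
    simp only [X, hf₀, mulVec_smul,
      adjugate_scalar_sub_mulVec_of_mulVec_eq_smul heig (hsimple_root hsimple).1, smul_smul]
    rw [inv_mul_cancel₀ (hsimple_root hsimple).2, one_smul]
  have hX0_ne : X0 ≠ 0 := by rintro rfl; simp at hX0
  have hgood : ∀ᶠ v in 𝓝 0, v ∈ U ∧ AnalyticAt ℝ f v ∧
      (M v).charpoly.rootMultiplicity (f v) = 1 ∧ X v ≠ 0 :=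
    (hU.eventually_mem h0U).and <| hf.eventually_analyticAt.and <| hf_simple.and <|
      (hX 0 h0U hf).continuousAt.eventually_ne (hX₀ ▸ hX0_ne)
  obtain ⟨V, hV, hVopen, h0V⟩ := mem_nhds_iff.mp hgood
  refine ⟨V, f, X, fun v hv => (hV hv).1, hVopen, h0V, fun v hv => (hV hv).2.1,
    fun v hv => hX v (hV hv).1 (hV hv).2.1, hf₀, hX₀, fun v hv => ?_⟩
  obtain ⟨-, -, hmult, hX_ne⟩ := hV hv
  exact ⟨hmult, hX_ne, mulVec_adjugate_mulVec_of_isRoot (hsimple_root hmult).1 _⟩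

/-- analytic perturbation of a simple eigenvalue. Let `U` be an open
neighborhood of `0` in `ℝ^n` and `M : U → M_d(ℝ)` a real-analytic family of matrices
(analyticity expressed entrywise). Suppose `M 0` has a simple real eigenvalue `λ₀ ≠ 0`
(a root of multiplicity one of the characteristic polynomial) with unit eigenvector `X₀`.
Then there are an open sub-neighborhood `V ⊆ U` of `0` and real-analytic maps
`f : V → ℝ`, `X : V → ℝ^d` with `f 0 = λ₀`, `X 0 = X₀`, and such that for every `v ∈ V`,
`f v` is a simple eigenvalue of `M v` with eigenvector `X v ≠ 0`. -/
theorem statement_9 {n d : ℕ} (U : Set (Fin n → ℝ)) (hU : IsOpen U)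
    (h0U : (0 : Fin n → ℝ) ∈ U)
    (M : (Fin n → ℝ) → Matrix (Fin d) (Fin d) ℝ)
    (hM : ∀ v ∈ U, ∀ i j : Fin d, AnalyticAt ℝ (fun w => M w i j) v)
    (lam0 : ℝ) (hlam0 : lam0 ≠ 0)
    (hsimple : (M 0).charpoly.rootMultiplicity lam0 = 1)
    (X0 : Fin d → ℝ) (hX0 : ‖X0‖ = 1) (heig : M 0 *ᵥ X0 = lam0 • X0) :
    ∃ (V : Set (Fin n → ℝ)) (f : (Fin n → ℝ) → ℝ) (X : (Fin n → ℝ) → Fin d → ℝ),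
      V ⊆ U ∧ IsOpen V ∧ (0 : Fin n → ℝ) ∈ V ∧
      (∀ v ∈ V, AnalyticAt ℝ f v) ∧ (∀ v ∈ V, AnalyticAt ℝ X v) ∧
      f 0 = lam0 ∧ X 0 = X0 ∧
      ∀ v ∈ V, (M v).charpoly.rootMultiplicity (f v) = 1 ∧
        X v ≠ 0 ∧ M v *ᵥ X v = f v • X v :=
  statement_9_general U hU h0U M hM lam0 hsimple X0 hX0 heig
end

section
/- Let A, B, D and Â, B̂, D̂ be matrices in GL_d(ℝ), each having d distinct positive eigenvalues, with eigendata as in the context. Assume: (1) λ_i(A) = λ_i(Â), λ_i(B) = λ_i(B̂), λ_i(D) = λ_i(D̂) for all i = 1, …, d; (2) for every ordered pair (X, Y) taken from {A, B, D} with X ≠ Y, and likewise for every ordered pair from {Â, B̂, D̂}, one has ⟨e^i(X), e_j(Y)⟩ ≠ 0 for all i, j; and (3) for all i, j, k ∈ {1, …, d}, Tr(p_i(A) p_j(B) p_k(D)) / Tr(p_j(B) p_k(D)) = Tr(p_i(Â) p_j(B̂) p_k(D̂)) / Tr(p_j(B̂) p_k(D̂)) (the denominators being nonzero by (2)). Then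 there exists C ∈ GL_d(ℝ) such that Â = C A C⁻¹, B̂ = C B C⁻¹, and D̂ = C D C⁻¹. -/
open Matrix

/-- The projection `p_i` onto the line spanned by the `i`-th basis vector of `ε`,
along the span of the other basis vectors: `p_i v = ⟨e^i, v⟩ e_i`, as a matrix in the
standard basis. -/
noncomputable def projMat {d : ℕ} (ε : Module.Basis (Fin d) ℝ (Fin d → ℝ)) (i : Fin d) :
    Matrix (Fin d) (Fin d) ℝ :=
  Matrix.of fun k l => ε.coord i (Pi.single l 1) * ε i k

/-- All the pairings `⟨e^i, f_j⟩` of the dual basis of `ε` against the basis `η`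
are nonzero. -/
def PairingsNonzero {d : ℕ} (ε η : Module.Basis (Fin d) ℝ (Fin d → ℝ)) : Prop :=
  ∀ i j : Fin d, ε.coord i (η j) ≠ 0

/-!
Write `P i j = ⟨e^i(A), e_j(B)⟩`, `Q k i = ⟨e^k(D), e_i(A)⟩` and `R k j = ⟨e^k(D), e_j(B)⟩`.
Since `p_i p_j p_k` and `p_j p_k` are rank one, the ratio of traces is `P i j * Q k i / R k j`.
Its equality with the hatted ratio says that `(P̂ / P) i j * (Q̂ / Q) k i` does not depend on `i`,
which forces `P̂ i j / P i j = s i / t j` and `Q̂ k i / Q k i = r k / s i` for nonzero scalars.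
The linear map sending `e_i(A)` to `s i • ê_i(A)` then sends `e_j(B)` to `t j • ê_j(B)` and
`e_k(D)` to `r k • ê_k(D)`; as the eigenvalues agree, it conjugates `A, B, D` to `Â, B̂, D̂`.
-/

theorem exists_eq_div_of_mul_eq {G ι κ μ : Type*} [CommGroup G] [Nonempty κ] [Nonempty μ]
    (ρ : ι → κ → G) (σ : μ → ι → G) (τ : μ → κ → G) (h : ∀ i j k, ρ i j * σ k i = τ k j) :
    ∃ (s : ι → G) (t : κ → G) (r : μ → G),
      (∀ i j, ρ i j = s i / t j) ∧ ∀ k i, σ k i = r k / s i := by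
  obtain ⟨j₀⟩ := ‹Nonempty κ›
  obtain ⟨k₀⟩ := ‹Nonempty μ›
  refine ⟨fun i => (σ k₀ i)⁻¹, fun j => (τ k₀ j)⁻¹, fun k => τ k j₀ / τ k₀ j₀, ?_, ?_⟩
  · intro i j
    simp [← h i j k₀, mul_comm]
  · intro k i
    simp [← h i j₀ k, ← h i j₀ k₀]

theorem exists_units_mul_eq_of_div_eq {K ι κ μ : Type*} [Field K] [Nonempty κ] [Nonempty μ]
    {P P' : ι → κ → K} {Q Q' : μ → ι → K} {R R' : μ → κ → K}
    (hP : ∀ i j, P i j ≠ 0) (hP' : ∀ i j, P' i j ≠ 0)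
    (hQ : ∀ k i, Q k i ≠ 0) (hQ' : ∀ k i, Q' k i ≠ 0)
    (hR : ∀ k j, R k j ≠ 0) (hR' : ∀ k j, R' k j ≠ 0)
    (h : ∀ i j k, P i j * Q k i / R k j = P' i j * Q' k i / R' k j) :
    ∃ (s : ι → Kˣ) (t : κ → Kˣ) (r : μ → Kˣ),
      (∀ i j, s i * P i j = t j * P' i j) ∧ ∀ k i, r k * Q k i = s i * Q' k i := by
  obtain ⟨s, t, r, hst, hrs⟩ := exists_eq_div_of_mul_eq
    (fun i j => Units.mk0 (P' i j) (hP' i j) / Units.mk0 (P i j) (hP i j))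
    (fun k i => Units.mk0 (Q' k i) (hQ' k i) / Units.mk0 (Q k i) (hQ k i))
    (fun k j => Units.mk0 (R' k j) (hR' k j) / Units.mk0 (R k j) (hR k j))
    fun i j k => Units.ext <| by
      have := h i j k
      rw [div_eq_div_iff (hR k j) (hR' k j)] at this
      simp only [Units.val_mul, Units.val_div_eq_div_val, Units.val_mk0]
      rw [div_mul_div_comm, div_eq_div_iff (mul_ne_zero (hP i j) (hQ k i)) (hR k j)]
      linear_combination -this
  refine ⟨s, t, r, fun i j => ?_, fun k i => ?_⟩
  · have := congrArg Units.val (hst i j)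
    simp only [Units.val_div_eq_div_val, Units.val_mk0] at this
    rw [div_eq_div_iff (hP i j) (t j).ne_zero] at this
    linear_combination -this
  · have := congrArg Units.val (hrs k i)
    simp only [Units.val_div_eq_div_val, Units.val_mk0] at this
    rw [div_eq_div_iff (hQ k i) (s i).ne_zero] at this
    linear_combination -this

theorem LinearMap.smulRight_comp_smulRight {R M M₂ M₃ : Type*} [CommSemiring R]
    [AddCommMonoid M] [Module R M] [AddCommMonoid M₂] [Module R M₂] [AddCommMonoid M₃]
    [Module R M₃] (f : M₂ →ₗ[R] R) (g : M →ₗ[R] R) (x : M₃) (y : M₂) :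
    f.smulRight x ∘ₗ g.smulRight y = f y • g.smulRight x := by
  ext v
  simp [smul_smul, mul_comm]

namespace Module.Basis

variable {R M N ι κ μ : Type*} [CommRing R] [AddCommGroup M] [Module R M]
  [AddCommGroup N] [Module R N]

noncomputable def coordProj (b : Basis ι R M) (i : ι) : Module.End R M :=
  (b.coord i).smulRight (b i)

section Trace

variable [Module.Free R M] [Module.Finite R M]

theorem trace_coordProj_mul_coordProj (η : Basis κ R M) (θ : Basis μ R M) (j : κ) (k : μ) :
    LinearMap.trace R M (η.coordProj j * θ.coordProj k) = η.coord j (θ k) * θ.coord k (η j) := by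
  rw [coordProj, coordProj, Module.End.mul_eq_comp, LinearMap.smulRight_comp_smulRight,
    map_smul, LinearMap.trace_smulRight, smul_eq_mul]

theorem trace_coordProj_mul_coordProj_mul_coordProj (ε : Basis ι R M) (η : Basis κ R M)
    (θ : Basis μ R M) (i : ι) (j : κ) (k : μ) :
    LinearMap.trace R M (ε.coordProj i * η.coordProj j * θ.coordProj k) =
      ε.coord i (η j) * η.coord j (θ k) * θ.coord k (ε i) := by
  rw [coordProj, coordProj, coordProj, Module.End.mul_eq_comp, Module.End.mul_eq_comp,
    LinearMap.smulRight_comp_smulRight, LinearMap.smul_comp,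
    LinearMap.smulRight_comp_smulRight, smul_smul, map_smul, LinearMap.trace_smulRight,
    smul_eq_mul]

end Trace

theorem coord_comp_eq_smul_coord (f : M →ₗ[R] N) (ε : Basis ι R M) (ε' : Basis ι R N)
    (s : ι → R) (hf : ∀ i, f (ε i) = s i • ε' i) (i : ι) :
    ε'.coord i ∘ₗ f = s i • ε.coord i := by
  refine ε.ext fun l => ?_
  rw [LinearMap.comp_apply, hf, map_smul, LinearMap.smul_apply, coord_apply, coord_apply,
    repr_self, repr_self, smul_eq_mul, smul_eq_mul]
  obtain rfl | hli := eq_or_ne l i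
  · rfl
  · simp [hli]

theorem map_eq_smul_of_mul_coord_eq (f : M →ₗ[R] N) (ε : Basis ι R M) (ε' : Basis ι R N)
    (η : Basis κ R M) (η' : Basis κ R N) (s : ι → R) (t : κ → R)
    (hf : ∀ i, f (ε i) = s i • ε' i) (h : ∀ i j, s i * ε.coord i (η j) = t j * ε'.coord i (η' j))
    (j : κ) : f (η j) = t j • η' j := by
  refine ε'.ext_elem fun i => ?_
  have := LinearMap.congr_fun (coord_comp_eq_smul_coord f ε ε' s hf i) (η j)
  simp only [LinearMap.comp_apply, LinearMap.smul_apply, coord_apply, smul_eq_mul] at this h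
  rw [this, h, map_smul, Finsupp.smul_apply, smul_eq_mul]

theorem map_eq_smul_of_mul_coord_eq' (f : M →ₗ[R] N) (ε : Basis ι R M) (ε' : Basis ι R N)
    (θ : Basis μ R M) (θ' : Basis μ R N) (s : ι → R) (r : μ → R)
    (hf : ∀ i, f (ε i) = s i • ε' i) (h : ∀ k i, r k * θ.coord k (ε i) = s i * θ'.coord k (ε' i))
    (k : μ) : f (θ k) = r k • θ' k := by
  set g := θ.constr R fun k => r k • θ' k
  have hg : f = g := ε.ext fun i => by
    rw [hf, map_eq_smul_of_mul_coord_eq g θ θ' ε ε' r s (fun k => θ.constr_basis _ _ k) h]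
  rw [hg, θ.constr_basis]

end Module.Basis

theorem projMat_eq_toMatrix' {d : ℕ} (ε : Module.Basis (Fin d) ℝ (Fin d → ℝ)) (i : Fin d) :
    projMat ε i = LinearMap.toMatrix' (ε.coordProj i) :=
  rfl

theorem trace_projMat_mul_mul_div_trace_mul {d : ℕ} (ε η θ : Module.Basis (Fin d) ℝ (Fin d → ℝ))
    (i j k : Fin d) (h : η.coord j (θ k) ≠ 0) :
    (projMat ε i * projMat η j * projMat θ k).trace / (projMat η j * projMat θ k).trace =
      ε.coord i (η j) * θ.coord k (ε i) / θ.coord k (η j) := by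
  simp only [projMat_eq_toMatrix', ← LinearMap.toMatrix'_mul, ← Matrix.trace_toLin'_eq,
    Matrix.toLin'_toMatrix', Module.Basis.trace_coordProj_mul_coordProj,
    Module.Basis.trace_coordProj_mul_coordProj_mul_coordProj]
  rw [mul_right_comm, mul_comm (η.coord j (θ k)), mul_div_mul_right _ _ h]

theorem LinearEquiv.isUnit_toMatrix' {n R : Type*} [Fintype n] [DecidableEq n] [CommRing R]
    (f : (n → R) ≃ₗ[R] (n → R)) : IsUnit (LinearMap.toMatrix' (f : Module.End R (n → R))) := by
  rw [LinearMap.isUnit_toMatrix'_iff, Module.End.isUnit_iff]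
  exact f.bijective

theorem Matrix.eq_toMatrix'_mul_mul_inv {n ι R : Type*} [Fintype n] [DecidableEq n] [CommRing R]
    (f : (n → R) ≃ₗ[R] (n → R)) (A A' : Matrix n n R) (ε ε' : Module.Basis ι R (n → R))
    (l s : ι → R) (hf : ∀ i, f (ε i) = s i • ε' i) (hA : ∀ i, A *ᵥ ε i = l i • ε i)
    (hA' : ∀ i, A' *ᵥ ε' i = l i • ε' i) :
    A' = LinearMap.toMatrix' (f : Module.End R (n → R)) * A *
      (LinearMap.toMatrix' (f : Module.End R (n → R)))⁻¹ := by
  set C := LinearMap.toMatrix' (f : Module.End R (n → R))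
  have hC : IsUnit C.det := (Matrix.isUnit_iff_isUnit_det _).mp f.isUnit_toMatrix'
  have hcomm : C * A = A' * C := Matrix.toLin'.injective <| ε.ext fun i => by
    rw [Matrix.toLin'_apply, Matrix.toLin'_apply, ← mulVec_mulVec, ← mulVec_mulVec, hA,
      mulVec_smul, LinearMap.toMatrix'_mulVec]
    simp only [LinearEquiv.coe_coe, hf, mulVec_smul, hA', smul_comm (l i)]
  rw [hcomm, mul_nonsing_inv_cancel_right _ _ hC]

theorem statement_14_general {d : ℕ}
    (A B D Ah Bh Dh : Matrix (Fin d) (Fin d) ℝ)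
    (lA lB lD lAh lBh lDh : Fin d → ℝ)
    (eA eB eD eAh eBh eDh : Module.Basis (Fin d) ℝ (Fin d → ℝ))
    -- each matrix has `d` distinct positive eigenvalues, with the given eigenbasis
    (heA : ∀ i, A *ᵥ eA i = lA i • eA i) (heB : ∀ i, B *ᵥ eB i = lB i • eB i)
    (heD : ∀ i, D *ᵥ eD i = lD i • eD i)
    (heAh : ∀ i, Ah *ᵥ eAh i = lAh i • eAh i) (heBh : ∀ i, Bh *ᵥ eBh i = lBh i • eBh i)
    (heDh : ∀ i, Dh *ᵥ eDh i = lDh i • eDh i)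
    -- (1) the eigenvalues agree
    (hA : lA = lAh) (hB : lB = lBh) (hD : lD = lDh)
    -- (2) all pairings of eigenvectors of distinct matrices are nonzero
    (hAB : PairingsNonzero eA eB)
    (hDA : PairingsNonzero eD eA)
    (hBD : PairingsNonzero eB eD) (hDB : PairingsNonzero eD eB)
    (hABh : PairingsNonzero eAh eBh)
    (hDAh : PairingsNonzero eDh eAh)
    (hBDh : PairingsNonzero eBh eDh) (hDBh : PairingsNonzero eDh eBh)
    -- (3) the correlation-function ratios agree
    (hT : ∀ i j k : Fin d,
      (projMat eA i * projMat eB j * projMat eD k).trace /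
          (projMat eB j * projMat eD k).trace =
        (projMat eAh i * projMat eBh j * projMat eDh k).trace /
          (projMat eBh j * projMat eDh k).trace) :
    ∃ C : Matrix (Fin d) (Fin d) ℝ, IsUnit C ∧
      Ah = C * A * C⁻¹ ∧ Bh = C * B * C⁻¹ ∧ Dh = C * D * C⁻¹ := by
  rcases isEmpty_or_nonempty (Fin d) with hd | hd
  · exact ⟨1, isUnit_one, Subsingleton.elim _ _, Subsingleton.elim _ _, Subsingleton.elim _ _⟩
  obtain ⟨s, t, r, hst, hrs⟩ := exists_units_mul_eq_of_div_eq hAB hABh hDA hDAh hDB hDBh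
    fun i j k => by
      simpa only [trace_projMat_mul_mul_div_trace_mul _ _ _ _ _ _ (hBD j k),
        trace_projMat_mul_mul_div_trace_mul _ _ _ _ _ _ (hBDh j k)] using hT i j k
  set f := eA.equiv (eAh.unitsSMul s) (Equiv.refl _)
  have hfA : ∀ i, f (eA i) = (s i : ℝ) • eAh i := fun i => by
    rw [Module.Basis.equiv_apply, Equiv.refl_apply, Module.Basis.unitsSMul_apply, Units.smul_def]
  have hfB := eA.map_eq_smul_of_mul_coord_eq f.toLinearMap eAh eB eBh _ (fun j => (t j : ℝ))
    hfA hst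
  have hfD := eA.map_eq_smul_of_mul_coord_eq' f.toLinearMap eAh eD eDh _ (fun k => (r k : ℝ))
    hfA hrs
  refine ⟨_, f.isUnit_toMatrix',
    Matrix.eq_toMatrix'_mul_mul_inv f A Ah eA eAh lA _ hfA heA (hA ▸ heAh),
    Matrix.eq_toMatrix'_mul_mul_inv f B Bh eB eBh lB _ hfB heB (hB ▸ heBh),
    Matrix.eq_toMatrix'_mul_mul_inv f D Dh eD eDh lD _ hfD heD (hD ▸ heDh)⟩

/-- rigidity for correlation functions. Let `A, B, D` and
`Â, B̂, D̂` be invertible matrices, each with `d` distinct positive eigenvalues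
`λ_1 > ⋯ > λ_d > 0` and eigenbases as indicated. Assume the eigenvalues of the hatted
matrices match those of the unhatted ones, that all pairings `⟨e^i(X), e_j(Y)⟩` for
ordered pairs `X ≠ Y` from `{A,B,D}` (and from `{Â,B̂,D̂}`) are nonzero, and that all the
ratios `Tr(p_i(A) p_j(B) p_k(D)) / Tr(p_j(B) p_k(D))` agree with their hatted
counterparts. Then some `C ∈ GL_d(ℝ)` simultaneously conjugates `A, B, D` to
`Â, B̂, D̂`. -/
theorem statement_14 {d : ℕ}
    (A B D Ah Bh Dh : Matrix (Fin d) (Fin d) ℝ)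
    (lA lB lD lAh lBh lDh : Fin d → ℝ)
    (eA eB eD eAh eBh eDh : Module.Basis (Fin d) ℝ (Fin d → ℝ))
    -- each matrix has `d` distinct positive eigenvalues, with the given eigenbasis
    (hlA : StrictAnti lA) (hlApos : ∀ i, 0 < lA i)
    (hlB : StrictAnti lB) (hlBpos : ∀ i, 0 < lB i)
    (hlD : StrictAnti lD) (hlDpos : ∀ i, 0 < lD i)
    (hlAh : StrictAnti lAh) (hlAhpos : ∀ i, 0 < lAh i)
    (hlBh : StrictAnti lBh) (hlBhpos : ∀ i, 0 < lBh i)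
    (hlDh : StrictAnti lDh) (hlDhpos : ∀ i, 0 < lDh i)
    (heA : ∀ i, A *ᵥ eA i = lA i • eA i) (heB : ∀ i, B *ᵥ eB i = lB i • eB i)
    (heD : ∀ i, D *ᵥ eD i = lD i • eD i)
    (heAh : ∀ i, Ah *ᵥ eAh i = lAh i • eAh i) (heBh : ∀ i, Bh *ᵥ eBh i = lBh i • eBh i)
    (heDh : ∀ i, Dh *ᵥ eDh i = lDh i • eDh i)
    -- (1) the eigenvalues agree
    (hA : lA = lAh) (hB : lB = lBh) (hD : lD = lDh)
    -- (2) all pairings of eigenvectors of distinct matrices are nonzero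
    (hAB : PairingsNonzero eA eB) (hBA : PairingsNonzero eB eA)
    (hAD : PairingsNonzero eA eD) (hDA : PairingsNonzero eD eA)
    (hBD : PairingsNonzero eB eD) (hDB : PairingsNonzero eD eB)
    (hABh : PairingsNonzero eAh eBh) (hBAh : PairingsNonzero eBh eAh)
    (hADh : PairingsNonzero eAh eDh) (hDAh : PairingsNonzero eDh eAh)
    (hBDh : PairingsNonzero eBh eDh) (hDBh : PairingsNonzero eDh eBh)
    -- (3) the correlation-function ratios agree
    (hT : ∀ i j k : Fin d,
      (projMat eA i * projMat eB j * projMat eD k).trace /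
          (projMat eB j * projMat eD k).trace =
        (projMat eAh i * projMat eBh j * projMat eDh k).trace /
          (projMat eBh j * projMat eDh k).trace) :
    ∃ C : Matrix (Fin d) (Fin d) ℝ, IsUnit C ∧
      Ah = C * A * C⁻¹ ∧ Bh = C * B * C⁻¹ ∧ Dh = C * D * C⁻¹ :=
  statement_14_general A B D Ah Bh Dh lA lB lD lAh lBh lDh eA eB eD eAh eBh eDh heA heB heD heAh
    heBh heDh hA hB hD hAB hDA hBD hDB hABh hDAh hBDh hDBh hT
end

section
/- Let d_1 ≤ d_2 be positive integers, let λ_1 > λ_2 > ⋯ > λ_{d_1} > 0 and μ_1 > μ_2 > ⋯ > μ_{d_2} > 0 be real numbers, and let c_1, …, c_{d_1} and e_1, …, e_{d_2} be nonzero real numbers. Suppose that for every positive integer n, |Σ_{i=1}^{d_1} λ_i^n c_i| = |Σ_{i=1}^{d_2} μ_i^n e_i|. Then d_1 = d_2, λ_i = μ_i for all i = 1, …, d_1, and there exists ε ∈ {1, −1} such that c_i = ε e_i for all i. -/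
open Filter Topology

/-- If all `|lam i| < M`, the normalized exponential sum tends to zero. -/
lemma st16_sum_div_tendsto_zero {d : ℕ} (lam c : Fin d → ℝ) (M : ℝ)
    (h : ∀ i, |lam i| < M) :
    Tendsto (fun n : ℕ => (∑ i, lam i ^ n * c i) / M ^ n) atTop (𝓝 0) := by
  have key : ∀ n : ℕ, (∑ i, lam i ^ n * c i) / M ^ n = ∑ i, (lam i / M) ^ n * c i := by
    intro n
    rw [Finset.sum_div]
    refine Finset.sum_congr rfl fun i _ => ?_
    rw [div_pow]; ring
  rw [show (fun n : ℕ => (∑ i, lam i ^ n * c i) / M ^ n)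
      = fun n : ℕ => ∑ i, (lam i / M) ^ n * c i from funext key]
  have h0 : Tendsto (fun n : ℕ => ∑ i : Fin d, (lam i / M) ^ n * c i) atTop
      (𝓝 (∑ _i : Fin d, (0 : ℝ))) := by
    refine tendsto_finset_sum _ fun i _ => ?_
    have hM : 0 < M := lt_of_le_of_lt (abs_nonneg _) (h i)
    have habs : |lam i / M| < 1 := by
      rw [abs_div, abs_of_pos hM, div_lt_one hM]; exact h i
    simpa using (tendsto_pow_atTop_nhds_zero_of_abs_lt_one habs).mul_const (c i)
  simpa using h0

/-- Leading-term limit. -/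
lemma st16_lead {d : ℕ} (lam c : Fin (d + 1) → ℝ)
    (hanti : StrictAnti lam) (hpos : ∀ i, 0 < lam i) :
    Tendsto (fun n : ℕ => (∑ i, lam i ^ n * c i) / lam 0 ^ n) atTop (𝓝 (c 0)) := by
  have h0 : (0 : ℝ) < lam 0 := hpos 0
  have key : ∀ n : ℕ, (∑ i, lam i ^ n * c i) / lam 0 ^ n
      = c 0 + (∑ i : Fin d, lam i.succ ^ n * c i.succ) / lam 0 ^ n := by
    intro n
    have hpow : lam 0 ^ n ≠ 0 := pow_ne_zero _ h0.ne'
    rw [Fin.sum_univ_succ, add_div, mul_comm, mul_div_assoc, div_self hpow, mul_one]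
  rw [show (fun n : ℕ => (∑ i, lam i ^ n * c i) / lam 0 ^ n)
      = fun n : ℕ => c 0 + (∑ i : Fin d, lam i.succ ^ n * c i.succ) / lam 0 ^ n
      from funext key]
  have htail : Tendsto (fun n : ℕ => (∑ i : Fin d, lam i.succ ^ n * c i.succ) / lam 0 ^ n)
      atTop (𝓝 0) := by
    refine st16_sum_div_tendsto_zero _ _ _ fun i => ?_
    rw [abs_of_pos (hpos i.succ)]
    exact hanti (Fin.succ_pos i)
  simpa using tendsto_const_nhds.add htail

lemma st16_eq_of_abs_eq_of_pos_mul {a b : ℝ} (h1 : |a| = |b|) (h2 : 0 < a * b) : a = b := by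
  rcases abs_eq_abs.mp h1 with h | h
  · exact h
  · exfalso; subst h; nlinarith [sq_nonneg b]

/-- Main identification lemma: if two exponential sums agree eventually, they are termwise equal. -/
lemma st16_main : ∀ (d₁ : ℕ) {d₂ : ℕ} (lam : Fin d₁ → ℝ) (mu : Fin d₂ → ℝ)
    (c : Fin d₁ → ℝ) (e : Fin d₂ → ℝ),
    StrictAnti lam → (∀ i, 0 < lam i) → StrictAnti mu → (∀ i, 0 < mu i) →
    (∀ i, c i ≠ 0) → (∀ i, e i ≠ 0) →
    (∀ᶠ n : ℕ in atTop, ∑ i, lam i ^ n * c i = ∑ j, mu j ^ n * e j) →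
    d₁ = d₂ ∧ ∀ (i : Fin d₁) (j : Fin d₂), (i : ℕ) = (j : ℕ) → lam i = mu j ∧ c i = e j := by
  intro d₁
  induction d₁ with
  | zero =>
    intro d₂ lam mu c e _ _ hmu hmupos _ he hev
    rcases d₂ with _ | m
    · exact ⟨rfl, fun i => i.elim0⟩
    · exfalso
      have h1 := st16_lead mu e hmu hmupos
      have h2 : (fun n : ℕ => (∑ j, mu j ^ n * e j) / mu 0 ^ n) =ᶠ[atTop]
          (fun _ : ℕ => (0 : ℝ)) := by
        filter_upwards [hev] with n hn
        simp only [Finset.univ_eq_empty, Finset.sum_empty] at hn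
        rw [← hn, zero_div]
      exact he 0 (tendsto_nhds_unique (h1.congr' h2) tendsto_const_nhds)
  | succ k ih =>
    intro d₂ lam mu c e hlam hlampos hmu hmupos hc he hev
    rcases d₂ with _ | m
    · exfalso
      have h1 := st16_lead lam c hlam hlampos
      have h2 : (fun n : ℕ => (∑ i, lam i ^ n * c i) / lam 0 ^ n) =ᶠ[atTop]
          (fun _ : ℕ => (0 : ℝ)) := by
        filter_upwards [hev] with n hn
        simp only [Finset.univ_eq_empty, Finset.sum_empty] at hn
        rw [hn, zero_div]
      exact hc 0 (tendsto_nhds_unique (h1.congr' h2) tendsto_const_nhds)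
    · have hl0 := st16_lead lam c hlam hlampos
      have hm0 := st16_lead mu e hmu hmupos
      have hlm : lam 0 = mu 0 := by
        by_contra hne
        rcases lt_or_gt_of_ne hne with hlt | hgt
        · -- lam 0 < mu 0 : divide by mu 0 ^ n
          have hz : Tendsto (fun n : ℕ => (∑ i, lam i ^ n * c i) / mu 0 ^ n) atTop (𝓝 0) := by
            refine st16_sum_div_tendsto_zero _ _ _ fun i => ?_
            rw [abs_of_pos (hlampos i)]
            exact lt_of_le_of_lt (hlam.antitone (Fin.zero_le i)) hlt
          have heq2 : (fun n : ℕ => (∑ i, lam i ^ n * c i) / mu 0 ^ n) =ᶠ[atTop]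
              (fun n : ℕ => (∑ j, mu j ^ n * e j) / mu 0 ^ n) := by
            filter_upwards [hev] with n hn
            rw [hn]
          exact he 0 (tendsto_nhds_unique hm0 (hz.congr' heq2))
        · have hz : Tendsto (fun n : ℕ => (∑ j, mu j ^ n * e j) / lam 0 ^ n) atTop (𝓝 0) := by
            refine st16_sum_div_tendsto_zero _ _ _ fun j => ?_
            rw [abs_of_pos (hmupos j)]
            exact lt_of_le_of_lt (hmu.antitone (Fin.zero_le j)) hgt
          have heq2 : (fun n : ℕ => (∑ j, mu j ^ n * e j) / lam 0 ^ n) =ᶠ[atTop]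
              (fun n : ℕ => (∑ i, lam i ^ n * c i) / lam 0 ^ n) := by
            filter_upwards [hev] with n hn
            rw [hn]
          exact hc 0 (tendsto_nhds_unique hl0 (hz.congr' heq2))
      have hce : c 0 = e 0 := by
        have heq2 : (fun n : ℕ => (∑ i, lam i ^ n * c i) / lam 0 ^ n) =ᶠ[atTop]
            (fun n : ℕ => (∑ j, mu j ^ n * e j) / mu 0 ^ n) := by
          filter_upwards [hev] with n hn
          rw [hn, hlm]
        exact tendsto_nhds_unique (hl0.congr' heq2) hm0
      have hevtail : ∀ᶠ n : ℕ in atTop,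
          ∑ i : Fin k, (lam ∘ Fin.succ) i ^ n * (c ∘ Fin.succ) i
            = ∑ j : Fin m, (mu ∘ Fin.succ) j ^ n * (e ∘ Fin.succ) j := by
        filter_upwards [hev] with n hn
        rw [Fin.sum_univ_succ, Fin.sum_univ_succ, hlm, hce] at hn
        simpa using add_left_cancel hn
      have hlam' : StrictAnti (lam ∘ Fin.succ) := fun a b hab =>
        hlam (Fin.succ_lt_succ_iff.mpr hab)
      have hmu' : StrictAnti (mu ∘ Fin.succ) := fun a b hab =>
        hmu (Fin.succ_lt_succ_iff.mpr hab)
      obtain ⟨hdk, hpair⟩ := ih (lam ∘ Fin.succ) (mu ∘ Fin.succ) (c ∘ Fin.succ) (e ∘ Fin.succ)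
        hlam' (fun i => hlampos _) hmu' (fun j => hmupos _) (fun i => hc _) (fun j => he _)
        hevtail
      refine ⟨by omega, ?_⟩
      intro i j hij
      rcases Fin.eq_zero_or_eq_succ i with rfl | ⟨i', rfl⟩
      · rcases Fin.eq_zero_or_eq_succ j with rfl | ⟨j', rfl⟩
        · exact ⟨hlm, hce⟩
        · simp at hij
      · rcases Fin.eq_zero_or_eq_succ j with rfl | ⟨j', rfl⟩
        · simp at hij
        · have : (i' : ℕ) = (j' : ℕ) := by
            simpa [Fin.val_succ] using hij
          exact hpair i' j' this

/-- Let `d₁ ≤ d₂`, let `λ_1 > ⋯ > λ_{d₁} > 0` and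
`μ_1 > ⋯ > μ_{d₂} > 0`, and let `c_1, …, c_{d₁}` and `e_1, …, e_{d₂}` be nonzero reals.
If `|Σ λ_iⁿ c_i| = |Σ μ_iⁿ e_i|` for every positive integer `n`, then `d₁ = d₂`,
`λ_i = μ_i` for all `i`, and there is a sign `ε ∈ {1, -1}` with `c_i = ε e_i` for
all `i`. -/
theorem statement_16 {d₁ d₂ : ℕ} (hd : d₁ ≤ d₂)
    (lam : Fin d₁ → ℝ) (mu : Fin d₂ → ℝ) (c : Fin d₁ → ℝ) (e : Fin d₂ → ℝ)
    (hlam : StrictAnti lam) (hlampos : ∀ i, 0 < lam i)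
    (hmu : StrictAnti mu) (hmupos : ∀ i, 0 < mu i)
    (hc : ∀ i, c i ≠ 0) (he : ∀ i, e i ≠ 0)
    (h : ∀ n : ℕ, 0 < n → |∑ i, lam i ^ n * c i| = |∑ i, mu i ^ n * e i|) :
    d₁ = d₂ ∧
    (∀ i : Fin d₁, lam i = mu ⟨i, lt_of_lt_of_le i.isLt hd⟩) ∧
    ∃ ε : ℝ, (ε = 1 ∨ ε = -1) ∧
      ∀ i : Fin d₁, c i = ε * e ⟨i, lt_of_lt_of_le i.isLt hd⟩ := by
  have habs : ∀ᶠ n : ℕ in atTop, |∑ i, lam i ^ n * c i| = |∑ i, mu i ^ n * e i| :=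
    eventually_atTop.mpr ⟨1, fun n hn => h n hn⟩
  clear h
  match d₁, d₂, hd, lam, mu, c, e, hlam, hlampos, hmu, hmupos, hc, he, habs with
  | 0, 0, hd, lam, mu, c, e, hlam, hlampos, hmu, hmupos, hc, he, habs =>
    exact ⟨rfl, fun i => i.elim0, 1, Or.inl rfl, fun i => i.elim0⟩
  | 0, m + 1, hd, lam, mu, c, e, hlam, hlampos, hmu, hmupos, hc, he, habs =>
    exfalso
    have h1 := st16_lead mu e hmu hmupos
    have h2 : (fun n : ℕ => (∑ j, mu j ^ n * e j) / mu 0 ^ n) =ᶠ[atTop]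
        (fun _ : ℕ => (0 : ℝ)) := by
      filter_upwards [habs] with n hn
      simp only [Finset.univ_eq_empty, Finset.sum_empty, abs_zero] at hn
      rw [abs_eq_zero.mp hn.symm, zero_div]
    exact he 0 (tendsto_nhds_unique (h1.congr' h2) tendsto_const_nhds)
  | k + 1, 0, hd, lam, mu, c, e, hlam, hlampos, hmu, hmupos, hc, he, habs =>
    exact absurd hd (by omega)
  | k + 1, m + 1, hd, lam, mu, c, e, hlam, hlampos, hmu, hmupos, hc, he, habs =>
    have hl0 : Tendsto (fun n : ℕ => (∑ i, lam i ^ n * c i) / lam 0 ^ n) atTop (𝓝 (c 0)) :=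
      st16_lead lam c hlam hlampos
    have hm0 : Tendsto (fun n : ℕ => (∑ j, mu j ^ n * e j) / mu 0 ^ n) atTop (𝓝 (e 0)) :=
      st16_lead mu e hmu hmupos
    -- lam 0 = mu 0
    have hlm : lam 0 = mu 0 := by
      by_contra hne
      rcases lt_or_gt_of_ne hne with hlt | hgt
      · have hz : Tendsto (fun n : ℕ => (∑ i, lam i ^ n * c i) / mu 0 ^ n) atTop (𝓝 0) := by
          refine st16_sum_div_tendsto_zero _ _ _ fun i => ?_
          rw [abs_of_pos (hlampos i)]
          exact lt_of_le_of_lt (hlam.antitone (Fin.zero_le i)) hlt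
        have heq2 : (fun n : ℕ => |(∑ i, lam i ^ n * c i) / mu 0 ^ n|) =ᶠ[atTop]
            (fun n : ℕ => |(∑ j, mu j ^ n * e j) / mu 0 ^ n|) := by
          filter_upwards [habs] with n hn
          rw [abs_div, abs_div, hn]
        have h1 : Tendsto (fun n : ℕ => |(∑ i, lam i ^ n * c i) / mu 0 ^ n|) atTop (𝓝 0) := by
          simpa using hz.abs
        have := tendsto_nhds_unique (h1.congr' heq2) hm0.abs
        exact he 0 (abs_eq_zero.mp this.symm)
      · have hz : Tendsto (fun n : ℕ => (∑ j, mu j ^ n * e j) / lam 0 ^ n) atTop (𝓝 0) := by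
          refine st16_sum_div_tendsto_zero _ _ _ fun j => ?_
          rw [abs_of_pos (hmupos j)]
          exact lt_of_le_of_lt (hmu.antitone (Fin.zero_le j)) hgt
        have heq2 : (fun n : ℕ => |(∑ j, mu j ^ n * e j) / lam 0 ^ n|) =ᶠ[atTop]
            (fun n : ℕ => |(∑ i, lam i ^ n * c i) / lam 0 ^ n|) := by
          filter_upwards [habs] with n hn
          rw [abs_div, abs_div, hn]
        have h1 : Tendsto (fun n : ℕ => |(∑ j, mu j ^ n * e j) / lam 0 ^ n|) atTop (𝓝 0) := by
          simpa using hz.abs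
        have := tendsto_nhds_unique (h1.congr' heq2) hl0.abs
        exact hc 0 (abs_eq_zero.mp this.symm)
    have hm0' : Tendsto (fun n : ℕ => (∑ j, mu j ^ n * e j) / lam 0 ^ n) atTop (𝓝 (e 0)) := by
      rw [hlm]; exact hm0
    have habsce : |c 0| = |e 0| := by
      have heq2 : (fun n : ℕ => |(∑ i, lam i ^ n * c i) / lam 0 ^ n|) =ᶠ[atTop]
          (fun n : ℕ => |(∑ j, mu j ^ n * e j) / lam 0 ^ n|) := by
        filter_upwards [habs] with n hn
        rw [abs_div, abs_div, hn]
      exact tendsto_nhds_unique (hl0.abs.congr' heq2) hm0'.abs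
    obtain ⟨ε, hε, hc0⟩ : ∃ ε : ℝ, (ε = 1 ∨ ε = -1) ∧ c 0 = ε * e 0 := by
      rcases abs_eq_abs.mp habsce with h1 | h1
      · exact ⟨1, Or.inl rfl, by rw [h1]; ring⟩
      · exact ⟨-1, Or.inr rfl, by rw [h1]; ring⟩
    have hεne : ε ≠ 0 := by rcases hε with rfl | rfl <;> norm_num
    -- eventually f n = ε * g n
    have hkey : ∀ᶠ n : ℕ in atTop,
        ∑ i, lam i ^ n * c i = ε * ∑ j, mu j ^ n * e j := by
      have hprod : Tendsto (fun n : ℕ =>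
          ((∑ i, lam i ^ n * c i) / lam 0 ^ n) * (ε * ((∑ j, mu j ^ n * e j) / lam 0 ^ n)))
          atTop (𝓝 (c 0 * (ε * e 0))) := hl0.mul (hm0'.const_mul ε)
      have hcpos : 0 < c 0 * (ε * e 0) := by
        rw [← hc0]
        exact mul_self_pos.mpr (hc 0)
      have hevpos := hprod.eventually (eventually_gt_nhds hcpos)
      filter_upwards [hevpos, habs] with n hp hn
      have hpow : (0 : ℝ) < lam 0 ^ n := pow_pos (hlampos 0) n
      have habs2 : |∑ i, lam i ^ n * c i| = |ε * ∑ j, mu j ^ n * e j| := by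
        rw [abs_mul, hn]
        rcases hε with rfl | rfl <;> simp
      have hq : (0 : ℝ) < lam 0 ^ n * lam 0 ^ n := mul_pos hpow hpow
      have hmul : 0 < (∑ i, lam i ^ n * c i) * (ε * ∑ j, mu j ^ n * e j) := by
        have h5 := mul_pos hp hq
        have heqq : ((∑ i, lam i ^ n * c i) / lam 0 ^ n)
            * (ε * ((∑ j, mu j ^ n * e j) / lam 0 ^ n)) * (lam 0 ^ n * lam 0 ^ n)
            = (∑ i, lam i ^ n * c i) * (ε * ∑ j, mu j ^ n * e j) := by
          field_simp
        rwa [heqq] at h5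
      exact st16_eq_of_abs_eq_of_pos_mul habs2 hmul
    have hev' : ∀ᶠ n : ℕ in atTop,
        ∑ i, lam i ^ n * c i = ∑ j, mu j ^ n * (ε * e j) := by
      filter_upwards [hkey] with n hn
      rw [hn, Finset.mul_sum]
      exact Finset.sum_congr rfl fun j _ => by ring
    obtain ⟨hdeq, hpair⟩ := st16_main (k + 1) lam mu c (fun j => ε * e j)
      hlam hlampos hmu hmupos hc (fun j => mul_ne_zero hεne (he j)) hev'
    exact ⟨hdeq, fun i => (hpair i ⟨i, lt_of_lt_of_le i.isLt hd⟩ rfl).1,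
      ε, hε, fun i => (hpair i ⟨i, lt_of_lt_of_le i.isLt hd⟩ rfl).2⟩
end
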